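/- Let φ : ℝ^d → ℝ be twice continuously differentiable with |∇φ(x)| ≤ C₁ and with the operator norm of the Hessian of φ bounded by C₂ for all x, and assume there exist c, R > 0 such that |∇φ(x)| ≥ c for all |x| ≥ R. Then there exist c₀ > 0 and h₀ > 0 such that V_h(x) := α_d^{−1} ∫_{|z|<1} e^{(φ(x) − φ(x+hz))/h} dz ≥ 1 + c₀ for all |x| ≥ R and all h ∈ (0, h₀]. -/

import Mathlib

open MeasureTheory InnerProductSpace
open scoped RealInnerProductSpace ENNReal

noncomputable section

/-- The Lebesgue volume `α_d` of the unit ball of `ℝ^d`. -/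
def unitBallVol (d : ℕ) : ℝ :=
  (volume (Metric.ball (0 : EuclideanSpace ℝ (Fin d)) 1)).toReal

/-- `V_h(x) := α_d⁻¹ ∫_{|z|<1} e^{(φ(x) − φ(x+hz))/h} dz`. -/
def Vh (d : ℕ) (φ : EuclideanSpace ℝ (Fin d) → ℝ) (h : ℝ)
    (x : EuclideanSpace ℝ (Fin d)) : ℝ :=
  (unitBallVol d)⁻¹ *
    ∫ z in Metric.ball (0 : EuclideanSpace ℝ (Fin d)) 1,
      Real.exp ((φ x - φ (x + h • z)) / h)

lemma aux_integrableOn {d : ℕ} {f : EuclideanSpace ℝ (Fin d) → ℝ} (hf : Continuous f) :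
    IntegrableOn f (Metric.ball (0 : EuclideanSpace ℝ (Fin d)) 1) volume :=
  (hf.locallyIntegrable.integrableOn_isCompact (isCompact_closedBall 0 1)).mono_set
    Metric.ball_subset_closedBall

lemma two_add_sq_le_exp_add_exp (s : ℝ) : 2 + s ^ 2 / 4 ≤ Real.exp s + Real.exp (-s) := by
  wlog hs : 0 ≤ s generalizing s
  · have := this (-s) (by linarith)
    rw [neg_neg] at this
    nlinarith [this]
  have h1 : 1 + s / 2 ≤ Real.exp (s / 2) := by
    have := Real.add_one_le_exp (s / 2); linarith
  have h2 : 1 - s ≤ Real.exp (-s) := by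
    have := Real.add_one_le_exp (-s); linarith
  have h3 : Real.exp (s / 2) * Real.exp (s / 2) = Real.exp s := by
    rw [← Real.exp_add]; ring_nf
  nlinarith [Real.exp_pos (s / 2)]

lemma taylor_bound {d : ℕ} {φ : EuclideanSpace ℝ (Fin d) → ℝ} {C₂ : ℝ}
    (hφ : ContDiff ℝ 2 φ)
    (hhess : ∀ x, ‖fderiv ℝ (gradient φ) x‖ ≤ C₂)
    (x v : EuclideanSpace ℝ (Fin d)) :
    |φ (x + v) - φ x - ⟪gradient φ x, v⟫| ≤ C₂ * ‖v‖ ^ 2 := by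
  have hC₂0 : 0 ≤ C₂ := le_trans (norm_nonneg _) (hhess 0)
  have hdiff : Differentiable ℝ φ := hφ.differentiable (by norm_num)
  have hfd : Differentiable ℝ (fderiv ℝ φ) :=
    (hφ.fderiv_right (m := 1) (by norm_num)).differentiable one_ne_zero
  have hgd : Differentiable ℝ (gradient φ) := by
    have h := ((toDual ℝ (EuclideanSpace ℝ (Fin d))).symm.toContinuousLinearEquiv.differentiable).comp hfd
    exact h
  have hlip : ∀ y w : EuclideanSpace ℝ (Fin d),
      ‖gradient φ y - gradient φ w‖ ≤ C₂ * ‖y - w‖ := fun y w =>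
    convex_univ.norm_image_sub_le_of_norm_fderiv_le (fun z _ => hgd z)
      (fun z _ => hhess z) trivial trivial
  have hfg : ∀ y : EuclideanSpace ℝ (Fin d),
      fderiv ℝ φ y = toDual ℝ _ (gradient φ y) := fun y =>
    ((toDual ℝ _).apply_symm_apply (fderiv ℝ φ y)).symm
  have key := (convex_closedBall x ‖v‖).norm_image_sub_le_of_norm_fderiv_le'
      (f := φ) (φ := fderiv ℝ φ x) (C := C₂ * ‖v‖) (x := x) (y := x + v)
      (fun z _ => hdiff z)
      (fun z hz => by
        have h1 : ‖fderiv ℝ φ z - fderiv ℝ φ x‖ = ‖gradient φ z - gradient φ x‖ := by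
          rw [hfg z, hfg x, ← map_sub, LinearIsometryEquiv.norm_map]
        rw [h1]
        calc ‖gradient φ z - gradient φ x‖ ≤ C₂ * ‖z - x‖ := hlip z x
          _ ≤ C₂ * ‖v‖ := by
              apply mul_le_mul_of_nonneg_left _ hC₂0
              simpa [dist_eq_norm] using Metric.mem_closedBall.1 hz)
      (Metric.mem_closedBall_self (norm_nonneg v))
      (by simp [Metric.mem_closedBall, dist_eq_norm])
  have h2 : fderiv ℝ φ x (x + v - x) = ⟪gradient φ x, v⟫ := by
    rw [add_sub_cancel_left, hfg x, toDual_apply_apply]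
  rw [h2, add_sub_cancel_left, Real.norm_eq_abs] at key
  nlinarith [key]

lemma exists_inner_sq_min (d : ℕ) (hd : 1 ≤ d) :
    ∃ m > 0, ∀ u : EuclideanSpace ℝ (Fin d), ‖u‖ = 1 →
      m ≤ ∫ z in Metric.ball (0 : EuclideanSpace ℝ (Fin d)) 1, ⟪u, z⟫ ^ 2 := by
  set B : Set (EuclideanSpace ℝ (Fin d)) := Metric.ball 0 1 with hBdef
  set F : EuclideanSpace ℝ (Fin d) → ℝ := fun u => ∫ z in B, ⟪u, z⟫ ^ 2 with hFdef
  have hμB : volume B ≠ ⊤ := (measure_ball_lt_top).ne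
  have hint : ∀ u : EuclideanSpace ℝ (Fin d),
      IntegrableOn (fun z => ⟪u, z⟫ ^ 2) B volume := fun u =>
    aux_integrableOn ((continuous_const.inner continuous_id).pow 2)
  have hest : ∀ u v : EuclideanSpace ℝ (Fin d), ‖u‖ ≤ 1 → ‖v‖ ≤ 1 →
      |F u - F v| ≤ 2 * (volume B).toReal * ‖u - v‖ := by
    intro u v hu hv
    have hsub : F u - F v = ∫ z in B, (⟪u, z⟫ ^ 2 - ⟪v, z⟫ ^ 2) :=
      (integral_sub (hint u) (hint v)).symm
    rw [hsub]
    have h1 : |∫ z in B, (⟪u, z⟫ ^ 2 - ⟪v, z⟫ ^ 2)|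
        ≤ ∫ z in B, |⟪u, z⟫ ^ 2 - ⟪v, z⟫ ^ 2| := by
      simpa [Real.norm_eq_abs] using
        norm_integral_le_integral_norm (μ := volume.restrict B)
          (f := fun z => ⟪u, z⟫ ^ 2 - ⟪v, z⟫ ^ 2)
    refine h1.trans ?_
    have h2 : ∫ z in B, |⟪u, z⟫ ^ 2 - ⟪v, z⟫ ^ 2|
        ≤ ∫ _z in B, 2 * ‖u - v‖ := by
      apply setIntegral_mono_on ((hint u).sub (hint v)).abs
        (integrableOn_const hμB) measurableSet_ball
      intro z hz
      simp only [Pi.sub_apply]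
      have hz1 : ‖z‖ ≤ 1 := le_of_lt (by simpa [hBdef, mem_ball_zero_iff] using hz)
      have e1 : ⟪u, z⟫ ^ 2 - ⟪v, z⟫ ^ 2 = ⟪u + v, z⟫ * ⟪u - v, z⟫ := by
        rw [inner_add_left, inner_sub_left]; ring
      rw [e1, abs_mul]
      have c1 : |⟪u + v, z⟫| ≤ 2 := by
        refine (abs_real_inner_le_norm _ _).trans ?_
        have := norm_add_le u v
        nlinarith [norm_nonneg (u + v), norm_nonneg z]
      have c2 : |⟪u - v, z⟫| ≤ ‖u - v‖ := by
        refine (abs_real_inner_le_norm _ _).trans ?_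
        nlinarith [norm_nonneg (u - v)]
      have := mul_le_mul c1 c2 (abs_nonneg _) (by norm_num)
      linarith
    refine h2.trans ?_
    rw [setIntegral_const, smul_eq_mul]
    ring_nf
    exact le_of_eq (by rw [measureReal_def]; ring)
  have hlip : LipschitzOnWith (2 * (volume B).toReal).toNNReal F
      (Metric.closedBall (0 : EuclideanSpace ℝ (Fin d)) 1) := by
    apply LipschitzOnWith.of_dist_le_mul
    intro u hu v hv
    rw [Real.dist_eq, dist_eq_norm]
    have h := hest u v (by simpa [mem_closedBall_zero_iff] using hu)
      (by simpa [mem_closedBall_zero_iff] using hv)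
    refine h.trans ?_
    apply mul_le_mul_of_nonneg_right _ (norm_nonneg _)
    rw [Real.coe_toNNReal']
    exact le_max_left _ _
  have hcont : ContinuousOn F (Metric.sphere (0 : EuclideanSpace ℝ (Fin d)) 1) :=
    hlip.continuousOn.mono Metric.sphere_subset_closedBall
  have hne : (Metric.sphere (0 : EuclideanSpace ℝ (Fin d)) 1).Nonempty := by
    refine ⟨EuclideanSpace.single ⟨0, hd⟩ (1 : ℝ), ?_⟩
    simp [mem_sphere_zero_iff_norm, EuclideanSpace.norm_single]
  obtain ⟨u₀, hu₀, hmin⟩ :=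
    (isCompact_sphere (0 : EuclideanSpace ℝ (Fin d)) 1).exists_isMinOn hne hcont
  have hu₀1 : ‖u₀‖ = 1 := mem_sphere_zero_iff_norm.1 hu₀
  have hpos : 0 < F u₀ := by
    apply (setIntegral_pos_iff_support_of_nonneg_ae
      (Filter.Eventually.of_forall fun z => sq_nonneg _) (hint u₀)).2
    set Kr : Submodule ℝ (EuclideanSpace ℝ (Fin d)) := LinearMap.ker (innerSL ℝ u₀ : EuclideanSpace ℝ (Fin d) →ₗ[ℝ] ℝ) with hKr
    have hKtop : Kr ≠ ⊤ := by
      intro htop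
      have hmem : u₀ ∈ Kr := htop ▸ Submodule.mem_top
      have h0 : ⟪u₀, u₀⟫ = 0 := by
        simpa [hKr, LinearMap.mem_ker] using hmem
      have : u₀ = 0 := inner_self_eq_zero.1 h0
      rw [this] at hu₀1; simp at hu₀1
    have hK0 : volume (Kr : Set (EuclideanSpace ℝ (Fin d))) = 0 :=
      Measure.addHaar_submodule volume Kr hKtop
    have hcover : B ⊆ (Function.support (fun z => ⟪u₀, z⟫ ^ 2) ∩ B)
        ∪ (Kr : Set (EuclideanSpace ℝ (Fin d))) := by
      intro z hz
      by_cases h0 : ⟪u₀, z⟫ = 0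
      · right
        simp only [hKr, SetLike.mem_coe, LinearMap.mem_ker]
        simpa using h0
      · left; exact ⟨pow_ne_zero 2 h0, hz⟩
    have hBpos : 0 < volume B := Metric.measure_ball_pos volume 0 one_pos
    calc (0 : ℝ≥0∞) < volume B := hBpos
      _ ≤ volume ((Function.support (fun z => ⟪u₀, z⟫ ^ 2) ∩ B)
          ∪ (Kr : Set (EuclideanSpace ℝ (Fin d)))) := measure_mono hcover
      _ ≤ volume (Function.support (fun z => ⟪u₀, z⟫ ^ 2) ∩ B)
          + volume (Kr : Set (EuclideanSpace ℝ (Fin d))) := measure_union_le _ _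
      _ = volume (Function.support (fun z => ⟪u₀, z⟫ ^ 2) ∩ B) := by rw [hK0, add_zero]
  exact ⟨F u₀, hpos, fun u hu =>
    isMinOn_iff.1 hmin u (by simpa [mem_sphere_zero_iff_norm] using hu)⟩

lemma eps_bound {d : ℕ} {φ : EuclideanSpace ℝ (Fin d) → ℝ} {C₂ : ℝ}
    (hφ : ContDiff ℝ 2 φ)
    (hhess : ∀ x, ‖fderiv ℝ (gradient φ) x‖ ≤ C₂)
    (x z : EuclideanSpace ℝ (Fin d)) {h : ℝ} (hh0 : 0 < h) (hz1 : ‖z‖ ≤ 1) :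
    |(φ x - φ (x + h • z)) / h + ⟪gradient φ x, z⟫| ≤ C₂ * h := by
  have hC₂0 : 0 ≤ C₂ := le_trans (norm_nonneg _) (hhess 0)
  have htay := taylor_bound hφ hhess x (h • z)
  have heq : (φ x - φ (x + h • z)) / h + ⟪gradient φ x, z⟫
      = -((φ (x + h • z) - φ x - ⟪gradient φ x, h • z⟫) / h) := by
    rw [real_inner_smul_right]; field_simp; ring
  rw [heq, abs_neg, abs_div, abs_of_pos hh0, div_le_iff₀ hh0]
  refine htay.trans ?_
  have hn : ‖h • z‖ ≤ h := by
    rw [norm_smul, Real.norm_eq_abs, abs_of_pos hh0]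
    nlinarith [norm_nonneg z]
  have key : 0 ≤ C₂ * ((h - ‖h • z‖) * (h + ‖h • z‖)) :=
    mul_nonneg hC₂0 (mul_nonneg (by linarith) (by linarith [norm_nonneg (h • z)]))
  nlinarith [key]

lemma pointwise_exp_bound {a b t C₁ C₂ h : ℝ} (hC₁0 : 0 ≤ C₁)
    (ht : |t| ≤ C₁) (he1 : |a + t| ≤ C₂ * h) (he2 : |b - t| ≤ C₂ * h) :
    Real.exp (-(C₂ * h)) * (1 + (t ^ 2 - 2 * C₁ * C₂ * h) / 8)
      ≤ (Real.exp a + Real.exp b) / 2 := by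
  set μ := (a + b) / 2 with hμdef
  set s := (a - b) / 2 with hsdef
  have h4 := abs_le.1 he1
  have h5 := abs_le.1 he2
  have hμlow : -(C₂ * h) ≤ μ := by rw [hμdef]; linarith [h4.1, h5.1]
  have hs2 : t ^ 2 - 2 * C₁ * C₂ * h ≤ s ^ 2 := by
    have he : |((a + t) - (b - t)) / 2| ≤ C₂ * h := by
      rw [abs_le]
      constructor <;> linarith [h4.1, h4.2, h5.1, h5.2]
    have hte : t * (((a + t) - (b - t)) / 2) ≤ C₁ * (C₂ * h) :=
      calc t * (((a + t) - (b - t)) / 2) ≤ |t * (((a + t) - (b - t)) / 2)| := le_abs_self _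
        _ = |t| * |((a + t) - (b - t)) / 2| := abs_mul _ _
        _ ≤ C₁ * (C₂ * h) := mul_le_mul ht he (abs_nonneg _) hC₁0
    have hseq : s = -t + ((a + t) - (b - t)) / 2 := by rw [hsdef]; ring
    rw [hseq]
    nlinarith [sq_nonneg (((a + t) - (b - t)) / 2), hte]
  have hexp := two_add_sq_le_exp_add_exp s
  have e1 : μ + s = a := by rw [hμdef, hsdef]; ring
  have e2 : μ + -s = b := by rw [hμdef, hsdef]; ring
  have hsum : Real.exp a + Real.exp b = Real.exp μ * (Real.exp s + Real.exp (-s)) := by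
    rw [mul_add, ← Real.exp_add, ← Real.exp_add, e1, e2]
  have hmono : Real.exp (-(C₂ * h)) ≤ Real.exp μ := Real.exp_le_exp.2 hμlow
  have c1 : Real.exp (-(C₂ * h)) * (2 + (t ^ 2 - 2 * C₁ * C₂ * h) / 4)
      ≤ Real.exp (-(C₂ * h)) * (2 + s ^ 2 / 4) :=
    mul_le_mul_of_nonneg_left (by linarith) (Real.exp_nonneg _)
  have c2 : Real.exp (-(C₂ * h)) * (2 + s ^ 2 / 4) ≤ Real.exp μ * (2 + s ^ 2 / 4) :=
    mul_le_mul_of_nonneg_right hmono (by positivity)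
  have c3 : Real.exp μ * (2 + s ^ 2 / 4) ≤ Real.exp μ * (Real.exp s + Real.exp (-s)) :=
    mul_le_mul_of_nonneg_left hexp (Real.exp_nonneg _)
  have hge : Real.exp (-(C₂ * h)) * (1 + (t ^ 2 - 2 * C₁ * C₂ * h) / 8)
      = Real.exp (-(C₂ * h)) * (2 + (t ^ 2 - 2 * C₁ * C₂ * h) / 4) / 2 := by ring
  rw [hge]
  linarith

set_option maxHeartbeats 2000000 in
/-- For `φ` of class `C²` with bounded gradient and Hessian, and
`|∇φ| ≥ c` outside the ball of radius `R`, one has `V_h(x) ≥ 1 + c₀` for `|x| ≥ R` and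
`h` small enough. -/
theorem Vh_lower_bound_at_infinity (d : ℕ) (hd : 1 ≤ d)
    (φ : EuclideanSpace ℝ (Fin d) → ℝ) (C₁ C₂ c R : ℝ)
    (hφ : ContDiff ℝ 2 φ)
    (hgrad : ∀ x, ‖gradient φ x‖ ≤ C₁)
    (hhess : ∀ x, ‖fderiv ℝ (gradient φ) x‖ ≤ C₂)
    (hc : 0 < c) (hR : 0 < R)
    (hlow : ∀ x : EuclideanSpace ℝ (Fin d), R ≤ ‖x‖ → c ≤ ‖gradient φ x‖) :
    ∃ c₀ > 0, ∃ h₀ > 0, ∀ x : EuclideanSpace ℝ (Fin d), R ≤ ‖x‖ →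
      ∀ h ∈ Set.Ioc (0 : ℝ) h₀, 1 + c₀ ≤ Vh d φ h x := by
  have hC₂0 : 0 ≤ C₂ := le_trans (norm_nonneg _) (hhess 0)
  have hC₁0 : 0 ≤ C₁ := le_trans (norm_nonneg _) (hgrad 0)
  obtain ⟨m, hm, hmle⟩ := exists_inner_sq_min d hd
  have hαball : (0 : ℝ≥0∞) < volume (Metric.ball (0 : EuclideanSpace ℝ (Fin d)) 1) :=
    Metric.measure_ball_pos volume 0 one_pos
  have hαtop : volume (Metric.ball (0 : EuclideanSpace ℝ (Fin d)) 1) ≠ ⊤ :=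
    measure_ball_lt_top.ne
  have hα : 0 < unitBallVol d := ENNReal.toReal_pos hαball.ne' hαtop
  set α := unitBallVol d with hαdef
  set K := c ^ 2 * m / (8 * α) with hKdef
  have hK : 0 < K := div_pos (mul_pos (pow_pos hc 2) hm) (by linarith)
  have hCC : 0 ≤ C₁ * C₂ := mul_nonneg hC₁0 hC₂0
  have hCK : 0 ≤ C₂ * (1 + K) := mul_nonneg hC₂0 (by linarith)
  set Bc := C₂ * (1 + K) + C₁ * C₂ / 4 + 1 with hBc
  clear_value K Bc
  have hBcpos : 0 < Bc := by linarith [hCC, hCK]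
  refine ⟨K / 2, by linarith, K / (2 * Bc), div_pos hK (by linarith), ?_⟩
  intro x hx h hh
  obtain ⟨hh0, hh1⟩ := hh
  set g := gradient φ x with hgdef
  have hgc : c ≤ ‖g‖ := hlow x hx
  have hgC₁ : ‖g‖ ≤ C₁ := hgrad x
  clear_value g
  set B := Metric.ball (0 : EuclideanSpace ℝ (Fin d)) 1 with hBdef
  have hmeasB : MeasurableSet B := measurableSet_ball
  set f : EuclideanSpace ℝ (Fin d) → ℝ := fun z => (φ x - φ (x + h • z)) / h with hfdef
  have hcontf : Continuous f := by
    apply Continuous.div_const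
    exact continuous_const.sub
      (hφ.continuous.comp (continuous_const.add (continuous_id.const_smul h)))
  have int1 : IntegrableOn (fun z => Real.exp (f z)) B volume :=
    aux_integrableOn (Real.continuous_exp.comp hcontf)
  have int2 : IntegrableOn (fun z => Real.exp (f (-z))) B volume :=
    aux_integrableOn (Real.continuous_exp.comp (hcontf.comp continuous_neg))
  -- symmetry of the ball
  have hsym : ∫ z in B, Real.exp (f (-z)) = ∫ z in B, Real.exp (f z) := by
    have hBneg : ∀ z : EuclideanSpace ℝ (Fin d), -z ∈ B ↔ z ∈ B := by
      intro z; simp [hBdef, mem_ball_zero_iff]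
    rw [← integral_indicator hmeasB, ← integral_indicator hmeasB,
      ← integral_neg_eq_self (B.indicator fun z => Real.exp (f z)) volume]
    congr 1
    funext z
    by_cases hz : z ∈ B
    · rw [Set.indicator_of_mem hz, Set.indicator_of_mem ((hBneg z).2 hz)]
    · rw [Set.indicator_of_notMem hz,
        Set.indicator_of_notMem (fun hcc => hz ((hBneg z).1 hcc))]
  -- pointwise lower bound
  have hpt : ∀ z ∈ B, Real.exp (-(C₂ * h)) * (1 + (⟪g, z⟫ ^ 2 - 2 * C₁ * C₂ * h) / 8)
      ≤ (Real.exp (f z) + Real.exp (f (-z))) / 2 := by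
    intro z hz
    have hz1 : ‖z‖ ≤ 1 := le_of_lt (by simpa [hBdef, mem_ball_zero_iff] using hz)
    have ht : |⟪g, z⟫| ≤ C₁ := by
      refine (abs_real_inner_le_norm g z).trans ?_
      nlinarith [norm_nonneg g, norm_nonneg z]
    have he1 : |f z + ⟪g, z⟫| ≤ C₂ * h := by
      have hb := eps_bound hφ hhess x z hh0 hz1
      rw [← hgdef] at hb
      exact hb
    have he2 : |f (-z) - ⟪g, z⟫| ≤ C₂ * h := by
      have hb := eps_bound hφ hhess x (-z) hh0 (by rwa [norm_neg])
      rw [← hgdef, inner_neg_right, ← sub_eq_add_neg] at hb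
      exact hb
    exact pointwise_exp_bound hC₁0 ht he1 he2
  -- integral comparisons
  have intavg : IntegrableOn (fun z => (Real.exp (f z) + Real.exp (f (-z))) / 2) B volume :=
    (int1.add int2).div_const 2
  have intT : IntegrableOn (fun z : EuclideanSpace ℝ (Fin d) => ⟪g, z⟫ ^ 2) B volume :=
    aux_integrableOn ((continuous_const.inner continuous_id).pow 2)
  have intQ : IntegrableOn (fun z : EuclideanSpace ℝ (Fin d) =>
      Real.exp (-(C₂ * h)) * (1 + (⟪g, z⟫ ^ 2 - 2 * C₁ * C₂ * h) / 8)) B volume :=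
    aux_integrableOn (continuous_const.mul (continuous_const.add
      ((((continuous_const.inner continuous_id).pow 2).sub continuous_const).div_const 8)))
  have step1 : (∫ z in B, Real.exp (-(C₂ * h)) * (1 + (⟪g, z⟫ ^ 2 - 2 * C₁ * C₂ * h) / 8))
      ≤ ∫ z in B, (Real.exp (f z) + Real.exp (f (-z))) / 2 :=
    setIntegral_mono_on intQ intavg hmeasB hpt
  have step2 : (∫ z in B, (Real.exp (f z) + Real.exp (f (-z))) / 2)
      = ∫ z in B, Real.exp (f z) := by
    rw [integral_div, integral_add int1 int2, hsym]; ring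
  have hvolB : (volume B).toReal = α := rfl
  have step3 : (∫ z in B, Real.exp (-(C₂ * h)) * (1 + (⟪g, z⟫ ^ 2 - 2 * C₁ * C₂ * h) / 8))
      = Real.exp (-(C₂ * h)) * (α * (1 - C₁ * C₂ * h / 4) + (∫ z in B, ⟪g, z⟫ ^ 2) / 8) := by
    rw [integral_const_mul]
    congr 1
    have hfe : (fun z : EuclideanSpace ℝ (Fin d) => 1 + (⟪g, z⟫ ^ 2 - 2 * C₁ * C₂ * h) / 8)
        = fun z => (1 - C₁ * C₂ * h / 4) + ⟪g, z⟫ ^ 2 / 8 := by funext z; ring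
    rw [hfe, integral_add (integrableOn_const (μ := volume) (s := B) (C := (1 - C₁ * C₂ * h / 4 : ℝ)) measure_ball_lt_top.ne) (intT.div_const 8),
      setIntegral_const, smul_eq_mul, integral_div, measureReal_def, hvolB]
  have step4 : c ^ 2 * m ≤ ∫ z in B, ⟪g, z⟫ ^ 2 := by
    have hgne : g ≠ 0 := by
      intro h0
      rw [h0, norm_zero] at hgc; linarith
    have hun : ‖‖g‖⁻¹ • g‖ = 1 := norm_smul_inv_norm hgne
    have hgnorm : (0 : ℝ) < ‖g‖ := lt_of_lt_of_le hc hgc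
    have hrw : (fun z : EuclideanSpace ℝ (Fin d) => (⟪g, z⟫ : ℝ) ^ 2)
        = fun z => ‖g‖ ^ 2 * ⟪‖g‖⁻¹ • g, z⟫ ^ 2 := by
      funext z
      rw [real_inner_smul_left]
      field_simp
    calc c ^ 2 * m ≤ ‖g‖ ^ 2 * ∫ z in B, ⟪‖g‖⁻¹ • g, z⟫ ^ 2 :=
          mul_le_mul (pow_le_pow_left₀ hc.le hgc 2) (hmle _ hun) hm.le (by positivity)
      _ = ∫ z in B, ⟪g, z⟫ ^ 2 := by rw [hrw, integral_const_mul]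
  have hVh : Vh d φ h x = α⁻¹ * ∫ z in B, Real.exp (f z) := rfl
  have chain : α⁻¹ * (Real.exp (-(C₂ * h)) * (α * (1 - C₁ * C₂ * h / 4) + c ^ 2 * m / 8))
      ≤ Vh d φ h x := by
    rw [hVh]
    apply mul_le_mul_of_nonneg_left _ (inv_nonneg.2 hα.le)
    calc Real.exp (-(C₂ * h)) * (α * (1 - C₁ * C₂ * h / 4) + c ^ 2 * m / 8)
        ≤ Real.exp (-(C₂ * h)) * (α * (1 - C₁ * C₂ * h / 4) + (∫ z in B, ⟪g, z⟫ ^ 2) / 8) :=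
          mul_le_mul_of_nonneg_left (by linarith [step4]) (Real.exp_nonneg _)
      _ = ∫ z in B, Real.exp (-(C₂ * h)) * (1 + (⟪g, z⟫ ^ 2 - 2 * C₁ * C₂ * h) / 8) :=
          step3.symm
      _ ≤ ∫ z in B, (Real.exp (f z) + Real.exp (f (-z))) / 2 := step1
      _ = ∫ z in B, Real.exp (f z) := step2
  have heq2 : α⁻¹ * (Real.exp (-(C₂ * h)) * (α * (1 - C₁ * C₂ * h / 4) + c ^ 2 * m / 8))
      = Real.exp (-(C₂ * h)) * (1 - C₁ * C₂ * h / 4 + K) := by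
    rw [hKdef]
    field_simp
  have chain2 : Real.exp (-(C₂ * h)) * (1 - C₁ * C₂ * h / 4 + K) ≤ Vh d φ h x := by
    rw [← heq2]; exact chain
  -- final arithmetic
  have e1 : 1 - C₂ * h ≤ Real.exp (-(C₂ * h)) := by
    have := Real.add_one_le_exp (-(C₂ * h)); linarith
  have hhB : h * Bc ≤ K / 2 := by
    calc h * Bc ≤ K / (2 * Bc) * Bc := mul_le_mul_of_nonneg_right hh1 hBcpos.le
      _ = K / 2 := by field_simp
  have hexpand : h * Bc = C₂ * h * (1 + K) + C₁ * C₂ * h / 4 + h := by rw [hBc]; ring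
  have hX1 : C₁ * C₂ * h / 4 ≤ K / 2 := by
    nlinarith [mul_nonneg hh0.le hCK]
  have hX0 : (0 : ℝ) ≤ 1 - C₁ * C₂ * h / 4 + K := by linarith
  have key1 : (1 - C₂ * h) * (1 - C₁ * C₂ * h / 4 + K)
      ≤ Real.exp (-(C₂ * h)) * (1 - C₁ * C₂ * h / 4 + K) :=
    mul_le_mul_of_nonneg_right e1 hX0
  have hsum2 : C₁ * C₂ * h / 4 + C₂ * h * (1 + K) ≤ K / 2 := by
    linarith [hhB, hexpand, hh0.le]
  have hXle : C₂ * h * (1 - C₁ * C₂ * h / 4 + K) ≤ C₂ * h * (1 + K) :=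
    mul_le_mul_of_nonneg_left (by nlinarith [mul_nonneg hCC hh0.le])
      (mul_nonneg hC₂0 hh0.le)
  have harith : 1 + K / 2 ≤ Real.exp (-(C₂ * h)) * (1 - C₁ * C₂ * h / 4 + K) := by
    nlinarith [key1, hXle, hsum2]
  linarith [chain2, harith]
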